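/- arXiv:1111.2417 — 8 statements merged into one kernel-verified Lean document; each statement's English description precedes it below -/
import Mathlib

section
/- For every positive integer k, the set Γ_k = ℤ × ℤ × (1/(2k))ℤ is a subgroup of H₃(ℝ), and it is invariant under α(π/2), α(π) and α(2π), i.e. α(π/2)(Γ_k) = Γ_k, α(π)(Γ_k) = Γ_k and α(2π)(Γ_k) = Γ_k. -/
open Real

/-- The real 3-dimensional Heisenberg group, as `ℝ³` with the multiplication
`(x,y,z)·(x',y',z') = (x+x', y+y', z+z'+ (xy'-x'y)/2)`. -/
@[ext] structure Heis : Type where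
  x : ℝ
  y : ℝ
  z : ℝ

namespace Heis

noncomputable instance : Mul Heis :=
  ⟨fun a b => ⟨a.x + b.x, a.y + b.y, a.z + b.z + (a.x * b.y - b.x * a.y) / 2⟩⟩

instance : One Heis := ⟨⟨0, 0, 0⟩⟩

instance : Inv Heis := ⟨fun a => ⟨-a.x, -a.y, -a.z⟩⟩

@[simp] lemma mul_x (a b : Heis) : (a * b).x = a.x + b.x := rfl
@[simp] lemma mul_y (a b : Heis) : (a * b).y = a.y + b.y := rfl
@[simp] lemma mul_z (a b : Heis) :
    (a * b).z = a.z + b.z + (a.x * b.y - b.x * a.y) / 2 := rfl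
@[simp] lemma one_x : (1 : Heis).x = 0 := rfl
@[simp] lemma one_y : (1 : Heis).y = 0 := rfl
@[simp] lemma one_z : (1 : Heis).z = 0 := rfl
@[simp] lemma inv_x (a : Heis) : a⁻¹.x = -a.x := rfl
@[simp] lemma inv_y (a : Heis) : a⁻¹.y = -a.y := rfl
@[simp] lemma inv_z (a : Heis) : a⁻¹.z = -a.z := rfl

noncomputable instance : Group Heis where
  mul_assoc a b c := by ext <;> simp <;> ring
  one_mul a := by ext <;> simp
  mul_one a := by ext <;> simp
  inv_mul_cancel a := by ext <;> simp

end Heis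

/-- The rotation action `α(t)` of `ℝ` on the Heisenberg group. -/
noncomputable def alphaMap (t : ℝ) (v : Heis) : Heis :=
  ⟨v.x * cos t + v.y * sin t, -v.x * sin t + v.y * cos t, v.z⟩

@[simp] lemma alphaMap_x (t : ℝ) (v : Heis) :
    (alphaMap t v).x = v.x * cos t + v.y * sin t := rfl
@[simp] lemma alphaMap_y (t : ℝ) (v : Heis) :
    (alphaMap t v).y = -v.x * sin t + v.y * cos t := rfl
@[simp] lemma alphaMap_z (t : ℝ) (v : Heis) : (alphaMap t v).z = v.z := rfl

/-- The oscillator group `G = ℝ ⋉_α H₃(ℝ)`. -/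
@[ext] structure Osc : Type where
  t : ℝ
  v : Heis

namespace Osc

noncomputable instance : Mul Osc := ⟨fun a b => ⟨a.t + b.t, a.v * alphaMap a.t b.v⟩⟩
instance : One Osc := ⟨⟨0, 1⟩⟩
noncomputable instance : Inv Osc := ⟨fun a => ⟨-a.t, alphaMap (-a.t) a.v⁻¹⟩⟩

@[simp] lemma mul_t (a b : Osc) : (a * b).t = a.t + b.t := rfl
@[simp] lemma mul_v (a b : Osc) : (a * b).v = a.v * alphaMap a.t b.v := rfl
@[simp] lemma one_t : (1 : Osc).t = 0 := rfl
@[simp] lemma one_v : (1 : Osc).v = 1 := rfl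
@[simp] lemma inv_t (a : Osc) : a⁻¹.t = -a.t := rfl
@[simp] lemma inv_v (a : Osc) : a⁻¹.v = alphaMap (-a.t) a.v⁻¹ := rfl

lemma alphaMap_one (t : ℝ) : alphaMap t (1 : Heis) = 1 := by
  ext <;> simp

lemma alphaMap_mul (t : ℝ) (v w : Heis) :
    alphaMap t (v * w) = alphaMap t v * alphaMap t w := by
  ext
  · simp; ring
  · simp; ring
  · simp
    linear_combination (w.x * v.y - v.x * w.y) * (sin_sq_add_cos_sq t)

lemma alphaMap_add (s t : ℝ) (v : Heis) :
    alphaMap (s + t) v = alphaMap s (alphaMap t v) := by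
  ext <;> simp [cos_add, sin_add] <;> ring

lemma alphaMap_zero (v : Heis) : alphaMap 0 v = v := by
  ext <;> simp

noncomputable instance : Group Osc where
  mul_assoc a b c := by
    refine Osc.ext (by simp; ring) ?_
    simp only [Osc.mul_v, Osc.mul_t, alphaMap_mul, ← alphaMap_add]
    rw [mul_assoc]
  one_mul a := Osc.ext (by simp) (by simp [alphaMap_zero])
  mul_one a := Osc.ext (by simp) (by simp [alphaMap_one])
  inv_mul_cancel a := by
    refine Osc.ext (by simp) ?_
    simp only [Osc.mul_v, Osc.inv_v, Osc.inv_t, Osc.one_v]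
    rw [← alphaMap_mul, inv_mul_cancel, alphaMap_one]

end Osc

/-- `Heis` carries the standard topology of `ℝ³`. -/
noncomputable instance : TopologicalSpace Heis :=
  TopologicalSpace.induced (fun v => (v.x, v.y, v.z)) inferInstance

/-- `Osc` carries the standard topology of `ℝ⁴`. -/
noncomputable instance : TopologicalSpace Osc :=
  TopologicalSpace.induced (fun g => (g.t, g.v.x, g.v.y, g.v.z)) inferInstance

lemma cos_sin_int (n : ℤ) :
    ∃ a b : ℤ, cos (π / 2 * n) = a ∧ sin (π / 2 * n) = b := by
  induction n using Int.induction_on with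
  | zero => exact ⟨1, 0, by simp, by simp⟩
  | succ n ih =>
    obtain ⟨a, b, ha, hb⟩ := ih
    have h : (((n : ℤ) + 1 : ℤ) : ℝ) = ((n : ℤ) : ℝ) + 1 := by push_cast; ring
    refine ⟨-b, a, ?_, ?_⟩
    · rw [h, mul_add, mul_one, cos_add, ha, hb]
      push_cast
      simp
    · rw [h, mul_add, mul_one, sin_add, ha, hb]
      simp
  | pred n ih =>
    obtain ⟨a, b, ha, hb⟩ := ih
    have h : ((-(n : ℤ) - 1 : ℤ) : ℝ) = ((-(n : ℤ) : ℤ) : ℝ) - 1 := by push_cast; ring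
    refine ⟨b, -a, ?_, ?_⟩
    · rw [h, mul_sub, mul_one, cos_sub, ha, hb]
      simp
    · rw [h, mul_sub, mul_one, sin_sub, ha, hb]
      push_cast
      simp

lemma cos_sin_int' (t : ℝ) (h : ∃ j : ℤ, t = π / 2 * j) :
    ∃ a b : ℤ, cos t = a ∧ sin t = b := by
  obtain ⟨j, rfl⟩ := h
  exact cos_sin_int j

/-- The lattice `θℤ ⋉ Γ_k` in the oscillator group, for `θ` an integer multiple of `π/2`. -/
noncomputable def LamTheta (k : ℕ+) (θ : ℝ) (m : ℤ) (hθ : θ = π / 2 * m) : Subgroup Osc where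
  carrier := {g | (∃ n : ℤ, g.t = θ * n) ∧ (∃ a : ℤ, g.v.x = a) ∧ (∃ b : ℤ, g.v.y = b) ∧
    (∃ c : ℤ, g.v.z = (c : ℝ) / (2 * ((k : ℕ) : ℝ)))}
  one_mem' := ⟨⟨0, by simp⟩, ⟨0, by simp⟩, ⟨0, by simp⟩, ⟨0, by simp⟩⟩
  mul_mem' := by
    rintro g h ⟨⟨n₁, hn₁⟩, ⟨a₁, ha₁⟩, ⟨b₁, hb₁⟩, ⟨c₁, hc₁⟩⟩
      ⟨⟨n₂, hn₂⟩, ⟨a₂, ha₂⟩, ⟨b₂, hb₂⟩, ⟨c₂, hc₂⟩⟩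
    obtain ⟨A, B, hA, hB⟩ := cos_sin_int' g.t ⟨m * n₁, by rw [hn₁, hθ]; push_cast; ring⟩
    have hk : ((k : ℕ) : ℝ) ≠ 0 := by
      exact_mod_cast k.ne_zero
    refine ⟨⟨n₁ + n₂, ?_⟩, ⟨a₁ + (a₂ * A + b₂ * B), ?_⟩, ⟨b₁ + (-(a₂ * B) + b₂ * A), ?_⟩,
      ⟨c₁ + c₂ + (k : ℕ) * (a₁ * (-(a₂ * B) + b₂ * A) - (a₂ * A + b₂ * B) * b₁), ?_⟩⟩
    · simp only [Osc.mul_t, hn₁, hn₂]; push_cast; ring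
    · simp only [Osc.mul_v, Heis.mul_x, alphaMap_x, ha₁, ha₂, hb₂, hA, hB]; push_cast; ring
    · simp only [Osc.mul_v, Heis.mul_y, alphaMap_y, hb₁, ha₂, hb₂, hA, hB]; push_cast; ring
    · simp only [Osc.mul_v, Heis.mul_z, alphaMap_x, alphaMap_y, alphaMap_z,
        ha₁, hb₁, ha₂, hb₂, hc₁, hc₂, hA, hB]
      field_simp
      push_cast
      ring
  inv_mem' := by
    rintro g ⟨⟨n₁, hn₁⟩, ⟨a₁, ha₁⟩, ⟨b₁, hb₁⟩, ⟨c₁, hc₁⟩⟩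
    obtain ⟨A, B, hA, hB⟩ := cos_sin_int' g.t ⟨m * n₁, by rw [hn₁, hθ]; push_cast; ring⟩
    refine ⟨⟨-n₁, ?_⟩, ⟨-(a₁ * A) + b₁ * B, ?_⟩, ⟨-(a₁ * B) - b₁ * A, ?_⟩, ⟨-c₁, ?_⟩⟩
    · simp only [Osc.inv_t, hn₁]; push_cast; ring
    · simp only [Osc.inv_v, alphaMap_x, Heis.inv_x, Heis.inv_y, cos_neg, sin_neg,
        ha₁, hb₁, hA, hB]
      push_cast; ring
    · simp only [Osc.inv_v, alphaMap_y, Heis.inv_x, Heis.inv_y, cos_neg, sin_neg,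
        ha₁, hb₁, hA, hB]
      push_cast; ring
    · simp only [Osc.inv_v, alphaMap_z, Heis.inv_z, hc₁]
      push_cast; ring

/-- The lattice `Λ_{k,0} = 2πℤ × Γ_k`. -/
noncomputable def Lam0 (k : ℕ+) : Subgroup Osc :=
  LamTheta k (2 * π) 4 (by push_cast; ring)

/-- The lattice `Λ_{k,π} = πℤ × Γ_k`. -/
noncomputable def LamPi (k : ℕ+) : Subgroup Osc :=
  LamTheta k π 2 (by push_cast; ring)

/-- The lattice `Λ_{k,π/2} = (π/2)ℤ × Γ_k`. -/
noncomputable def LamPi2 (k : ℕ+) : Subgroup Osc :=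
  LamTheta k (π / 2) 1 (by push_cast; ring)

/-- The lattice `Γ_k = ℤ × ℤ × (1/(2k))ℤ` in the Heisenberg group. -/
noncomputable def Gamma (k : ℕ+) : Subgroup Heis where
  carrier := {v | (∃ a : ℤ, v.x = a) ∧ (∃ b : ℤ, v.y = b) ∧
    (∃ c : ℤ, v.z = (c : ℝ) / (2 * ((k : ℕ) : ℝ)))}
  one_mem' := ⟨⟨0, by simp⟩, ⟨0, by simp⟩, ⟨0, by simp⟩⟩
  mul_mem' := by
    rintro v w ⟨⟨a₁, ha₁⟩, ⟨b₁, hb₁⟩, ⟨c₁, hc₁⟩⟩ ⟨⟨a₂, ha₂⟩, ⟨b₂, hb₂⟩, ⟨c₂, hc₂⟩⟩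
    have hk : ((k : ℕ) : ℝ) ≠ 0 := by exact_mod_cast k.ne_zero
    refine ⟨⟨a₁ + a₂, ?_⟩, ⟨b₁ + b₂, ?_⟩, ⟨c₁ + c₂ + (k : ℕ) * (a₁ * b₂ - a₂ * b₁), ?_⟩⟩
    · simp [ha₁, ha₂]
    · simp [hb₁, hb₂]
    · simp only [Heis.mul_z, ha₁, hb₁, ha₂, hb₂, hc₁, hc₂]
      field_simp
      push_cast
      ring
  inv_mem' := by
    rintro v ⟨⟨a₁, ha₁⟩, ⟨b₁, hb₁⟩, ⟨c₁, hc₁⟩⟩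
    refine ⟨⟨-a₁, by simp [ha₁]⟩, ⟨-b₁, by simp [hb₁]⟩, ⟨-c₁, ?_⟩⟩
    simp only [Heis.inv_z, hc₁]
    push_cast
    ring

/-- The subset `pℤ × qℤ × rℤ × sℤ` of the oscillator group. -/
def prodSet (p q r s : ℝ) : Set Osc :=
  {g | (∃ n : ℤ, g.t = p * n) ∧ (∃ n : ℤ, g.v.x = q * n) ∧
    (∃ n : ℤ, g.v.y = r * n) ∧ (∃ n : ℤ, g.v.z = s * n)}

lemma alphaMap_mapsTo_Gamma (k : ℕ+) {t : ℝ} {A B : ℤ} (hA : cos t = A) (hB : sin t = B) :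
    Set.MapsTo (alphaMap t) (Gamma k : Set Heis) (Gamma k) := by
  rintro v ⟨⟨a, ha⟩, ⟨b, hb⟩, hc⟩
  refine ⟨⟨a * A + b * B, ?_⟩, ⟨-(a * B) + b * A, ?_⟩, hc⟩ <;>
    simp only [alphaMap_x, alphaMap_y, ha, hb, hA, hB] <;> push_cast <;> ring

lemma alphaMap_image_Gamma (k : ℕ+) {t : ℝ} (ht : ∃ j : ℤ, t = π / 2 * j) :
    alphaMap t '' (Gamma k : Set Heis) = (Gamma k : Set Heis) := by
  obtain ⟨A, B, hA, hB⟩ := cos_sin_int' t ht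
  have hA' : cos (-t) = A := by rw [cos_neg, hA]
  have hB' : sin (-t) = (-B : ℤ) := by rw [sin_neg, hB, Int.cast_neg]
  refine (alphaMap_mapsTo_Gamma k hA hB).image_subset.antisymm fun v hv =>
    ⟨alphaMap (-t) v, alphaMap_mapsTo_Gamma k hA' hB' hv, ?_⟩
  rw [← Osc.alphaMap_add, add_neg_cancel, Osc.alphaMap_zero]

/-- For every positive integer `k`, the set `Γ_k = ℤ × ℤ × (1/(2k))ℤ` is a
subgroup of `H₃(ℝ)`, invariant under `α(π/2)`, `α(π)` and `α(2π)`. -/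
theorem statement1 (k : ℕ+) :
    (∃ S : Subgroup Heis, (S : Set Heis) =
      {v : Heis | (∃ a : ℤ, v.x = a) ∧ (∃ b : ℤ, v.y = b) ∧
        (∃ c : ℤ, v.z = (c : ℝ) / (2 * ((k : ℕ) : ℝ)))}) ∧
    alphaMap (π / 2) '' (Gamma k : Set Heis) = (Gamma k : Set Heis) ∧
    alphaMap π '' (Gamma k : Set Heis) = (Gamma k : Set Heis) ∧
    alphaMap (2 * π) '' (Gamma k : Set Heis) = (Gamma k : Set Heis) := by
  exact ⟨⟨Gamma k, rfl⟩, alphaMap_image_Gamma k ⟨1, by simp⟩,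
    alphaMap_image_Gamma k (t := π) ⟨2, by push_cast; ring⟩,
    alphaMap_image_Gamma k (t := 2 * π) ⟨4, by push_cast; ring⟩⟩
end

section
/- For every positive integer k and every i ∈ {0, π, π/2}, the set Λ_{k,i} is a subgroup of the oscillator group G which is discrete (with respect to the standard topology of ℝ⁴) and cocompact, i.e. the quotient space G/Λ_{k,i} is compact. -/
open Real

/-!
`Λ = θℤ ⋉ Γ_k` lies in the product lattice `θℤ × ℤ × ℤ × (1/2k)ℤ` of `ℝ⁴`, hence is discrete.
For cocompactness, write `g = (t, u)` with `t = s + θn`, `0 ≤ s < θ`. Since `α(s)` is an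
automorphism, `(s, α(s) b)⁻¹ g = (θn, b⁻¹ α(-s) u)`, and `b` can be chosen in the unit cube with
`b⁻¹ α(-s) u ∈ Γ_k` (integer parts in `x`, `y`, then in `2k z`). So the compact image of
`[0, θ] × [0, 1]³` under `(s, b) ↦ (s, α(s) b)` maps onto `G ⧸ Λ`.
-/

open Set

instance discreteTopology_zmultiples_coe (a : ℝ) :
    DiscreteTopology (AddSubgroup.zmultiples a : Set ℝ) :=
  inferInstanceAs (DiscreteTopology (AddSubgroup.zmultiples a))

instance discreteTopology_setProd {X Y : Type*} [TopologicalSpace X] [TopologicalSpace Y]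
    {s : Set X} {t : Set Y} [DiscreteTopology s] [DiscreteTopology t] :
    DiscreteTopology (s ×ˢ t : Set (X × Y)) :=
  (Homeomorph.Set.prod s t).symm.discreteTopology

lemma compactSpace_quotient_of_isCompact {G : Type*} [Group G] [TopologicalSpace G]
    (H : Subgroup G) {K : Set G} (hK : IsCompact K) (hKH : ∀ g, ∃ x ∈ K, x⁻¹ * g ∈ H) :
    CompactSpace (G ⧸ H) := by
  have hsurj : QuotientGroup.mk '' K = (univ : Set (G ⧸ H)) := by
    refine eq_univ_of_forall fun q => ?_
    obtain ⟨g, rfl⟩ := QuotientGroup.mk_surjective q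
    obtain ⟨x, hx, hxg⟩ := hKH g
    exact ⟨x, hx, QuotientGroup.eq.mpr hxg⟩
  exact isCompact_univ_iff.mp (hsurj ▸ hK.image continuous_quotient_mk')

def oscCoords (g : Osc) : ℝ × ℝ × ℝ × ℝ := (g.t, g.v.x, g.v.y, g.v.z)

lemma continuous_oscCoords : Continuous oscCoords := continuous_induced_dom

lemma oscCoords_injective : Function.Injective oscCoords := by
  intro g h hgh
  simp only [oscCoords, Prod.mk.injEq] at hgh
  obtain ⟨ht, hx, hy, hz⟩ := hgh
  exact Osc.ext ht (Heis.ext hx hy hz)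

lemma prodSet_eq_preimage (p q r s : ℝ) :
    prodSet p q r s = oscCoords ⁻¹' ((AddSubgroup.zmultiples p : Set ℝ) ×ˢ
      (AddSubgroup.zmultiples q : Set ℝ) ×ˢ (AddSubgroup.zmultiples r : Set ℝ) ×ˢ
      (AddSubgroup.zmultiples s : Set ℝ)) := by
  ext g
  simp [prodSet, oscCoords, AddSubgroup.mem_zmultiples_iff, mul_comm, eq_comm]

lemma discreteTopology_prodSet (p q r s : ℝ) : DiscreteTopology (prodSet p q r s) := by
  rw [prodSet_eq_preimage]
  exact .preimage_of_continuous_injective _ continuous_oscCoords oscCoords_injective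

lemma alphaMap_inv (t : ℝ) (v : Heis) : alphaMap t v⁻¹ = (alphaMap t v)⁻¹ := by
  ext <;> simp <;> ring

lemma Heis.exists_inv_mul_mem_gamma (k : ℕ+) (u : Heis) :
    ∃ b : Heis, b.x ∈ Icc 0 1 ∧ b.y ∈ Icc 0 1 ∧ b.z ∈ Icc 0 1 ∧ b⁻¹ * u ∈ _root_.Gamma k := by
  have hk : (1 : ℝ) ≤ (k : ℕ) := by exact_mod_cast k.pos
  set x := Int.fract u.x
  set y := Int.fract u.y
  set Z := u.z + (u.x * y - x * u.y) / 2
  refine ⟨⟨x, y, Int.fract (2 * (k : ℕ) * Z) / (2 * (k : ℕ))⟩,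
    ⟨Int.fract_nonneg _, (Int.fract_lt_one _).le⟩, ⟨Int.fract_nonneg _, (Int.fract_lt_one _).le⟩,
    ⟨by positivity, ?_⟩,
    ⟨⌊u.x⌋, ?_⟩, ⟨⌊u.y⌋, ?_⟩, ⟨⌊2 * (k : ℕ) * Z⌋, ?_⟩⟩
  · rw [div_le_one (by positivity)]
    linarith [Int.fract_lt_one (2 * (k : ℕ) * Z)]
  · simp only [Heis.mul_x, Heis.inv_x, x, Int.fract]
    ring
  · simp only [Heis.mul_y, Heis.inv_y, y, Int.fract]
    ring
  · simp only [Heis.mul_z, Heis.inv_x, Heis.inv_y, Heis.inv_z, Int.fract]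
    field_simp
    ring

noncomputable def rotatedChart (p : ℝ × ℝ × ℝ × ℝ) : Osc :=
  ⟨p.1, alphaMap p.1 ⟨p.2.1, p.2.2.1, p.2.2.2⟩⟩

lemma continuous_rotatedChart : Continuous rotatedChart := by
  refine continuous_induced_rng.2 ?_
  simp only [Function.comp_def, rotatedChart, alphaMap_x, alphaMap_y, alphaMap_z]
  fun_prop

section LamTheta

variable (k : ℕ+) {θ : ℝ} (m : ℤ) (hθ : θ = π / 2 * m)

lemma lamTheta_subset_prodSet :
    (LamTheta k θ m hθ : Set Osc) ⊆ prodSet θ 1 1 (1 / (2 * (k : ℕ))) := by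
  rintro g ⟨hn, ⟨a, ha⟩, ⟨b, hb⟩, ⟨c, hc⟩⟩
  exact ⟨hn, ⟨a, by rw [ha, one_mul]⟩, ⟨b, by rw [hb, one_mul]⟩, ⟨c, by rw [hc]; ring⟩⟩

lemma discreteTopology_lamTheta : DiscreteTopology (LamTheta k θ m hθ) :=
  (discreteTopology_prodSet _ _ _ _).of_subset (lamTheta_subset_prodSet k m hθ)

lemma exists_inv_mul_mem_lamTheta (hθpos : 0 < θ) (g : Osc) :
    ∃ x ∈ rotatedChart '' (Icc 0 θ ×ˢ Icc 0 1 ×ˢ Icc 0 1 ×ˢ Icc 0 1),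
      x⁻¹ * g ∈ LamTheta k θ m hθ := by
  set s := toIcoMod hθpos 0 g.t
  have hs : s ∈ Ico 0 θ := by simpa using toIcoMod_mem_Ico hθpos 0 g.t
  have hts : g.t - toIcoDiv hθpos 0 g.t • θ = s := self_sub_toIcoDiv_zsmul hθpos 0 g.t
  obtain ⟨b, hbx, hby, hbz, hb⟩ := Heis.exists_inv_mul_mem_gamma k (alphaMap (-s) g.v)
  refine ⟨rotatedChart (s, b.x, b.y, b.z),
    mem_image_of_mem _ ⟨Ico_subset_Icc_self hs, hbx, hby, hbz⟩, ⟨toIcoDiv hθpos 0 g.t, ?_⟩, ?_⟩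
  · rw [zsmul_eq_mul] at hts
    simp only [Osc.mul_t, Osc.inv_t, rotatedChart]
    linarith
  · simp only [Osc.mul_v, Osc.inv_v, Osc.inv_t, rotatedChart]
    rwa [alphaMap_inv, ← Osc.alphaMap_add, neg_add_cancel, Osc.alphaMap_zero]

lemma compactSpace_quotient_lamTheta (hθpos : 0 < θ) :
    CompactSpace (Osc ⧸ LamTheta k θ m hθ) :=
  compactSpace_quotient_of_isCompact _
    ((isCompact_Icc.prod (isCompact_Icc.prod (isCompact_Icc.prod isCompact_Icc))).image
      continuous_rotatedChart)
    (exists_inv_mul_mem_lamTheta k m hθ hθpos)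

end LamTheta

/-- For every positive integer `k` and every `i ∈ {0, π, π/2}`, the set
`Λ_{k,i}` is a subgroup of the oscillator group `G` which is discrete (w.r.t. the standard
topology of `ℝ⁴`) and cocompact. -/
theorem statement2 (k : ℕ+) :
    ((Lam0 k : Set Osc) = {g : Osc | (∃ n : ℤ, g.t = 2 * π * n) ∧ (∃ a : ℤ, g.v.x = a) ∧
      (∃ b : ℤ, g.v.y = b) ∧ (∃ c : ℤ, g.v.z = (c : ℝ) / (2 * ((k : ℕ) : ℝ)))}) ∧
    ((LamPi k : Set Osc) = {g : Osc | (∃ n : ℤ, g.t = π * n) ∧ (∃ a : ℤ, g.v.x = a) ∧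
      (∃ b : ℤ, g.v.y = b) ∧ (∃ c : ℤ, g.v.z = (c : ℝ) / (2 * ((k : ℕ) : ℝ)))}) ∧
    ((LamPi2 k : Set Osc) = {g : Osc | (∃ n : ℤ, g.t = π / 2 * n) ∧ (∃ a : ℤ, g.v.x = a) ∧
      (∃ b : ℤ, g.v.y = b) ∧ (∃ c : ℤ, g.v.z = (c : ℝ) / (2 * ((k : ℕ) : ℝ)))}) ∧
    ∀ Λ ∈ ({Lam0 k, LamPi k, LamPi2 k} : Set (Subgroup Osc)),
      DiscreteTopology Λ ∧ CompactSpace (Osc ⧸ Λ) := by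
  refine ⟨rfl, rfl, rfl, ?_⟩
  rintro Λ (rfl | rfl | rfl) <;>
    exact ⟨discreteTopology_lamTheta .., compactSpace_quotient_lamTheta _ _ _ (by positivity)⟩
end

section
/- For every positive integer k, one has Λ_{k,0} ⊆ Λ_{k,π} ⊆ Λ_{k,π/2}; moreover Λ_{k,0} is a normal subgroup of index 2 in Λ_{k,π}, Λ_{k,π} is a normal subgroup of index 2 in Λ_{k,π/2}, and Λ_{k,0} is a normal subgroup of index 4 in Λ_{k,π/2}. -/
open Real

/-!
For `θ' ≠ 0`, the map `g ↦ g.t / θ'` is a homomorphism from `θ'ℤ ⋉ Γ_k` onto `ℤ`. When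
`θ = c θ'`, the subgroup `θℤ ⋉ Γ_k` is the preimage of `cℤ`, i.e. the kernel of the induced
surjection onto `ℤ/cℤ`; hence it is normal of index `|c|`. The three inclusions of the theorem
are the cases `c = 2, 2, 4`.
-/

section

variable (k : ℕ+) {θ θ' : ℝ} {m m' : ℤ} (hθ : θ = π / 2 * m) (hθ' : θ' = π / 2 * m')

lemma lamTheta_le_lamTheta (c : ℤ) (hc : θ = θ' * c) :
    LamTheta k θ m hθ ≤ LamTheta k θ' m' hθ' := by
  rintro g ⟨⟨n, hn⟩, hv⟩
  exact ⟨⟨c * n, by rw [hn, hc]; push_cast; ring⟩, hv⟩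

noncomputable def lamThetaLevel (hθ'0 : θ' ≠ 0) : LamTheta k θ' m' hθ' →* Multiplicative ℤ where
  toFun g := Multiplicative.ofAdd ⌊(g : Osc).t / θ'⌋
  map_one' := by simp
  map_mul' g h := by
    obtain ⟨⟨n, hn⟩, -⟩ := g.2
    obtain ⟨⟨n', hn'⟩, -⟩ := h.2
    have hfloor (l : ℤ) : ⌊θ' * l / θ'⌋ = l := by
      rw [mul_div_cancel_left₀ _ hθ'0, Int.floor_intCast]
    simp only [Subgroup.coe_mul, Osc.mul_t, hn, hn', ← mul_add, ← Int.cast_add, hfloor,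
      ofAdd_add]

section

variable {k hθ'} (hθ'0 : θ' ≠ 0)

lemma t_eq_mul_lamThetaLevel (g : LamTheta k θ' m' hθ') :
    (g : Osc).t = θ' * (lamThetaLevel k hθ' hθ'0 g).toAdd := by
  obtain ⟨⟨n, hn⟩, -⟩ := g.2
  simp [lamThetaLevel, hn, mul_div_cancel_left₀ _ hθ'0]

lemma lamThetaLevel_surjective : Function.Surjective (lamThetaLevel k hθ' hθ'0) := by
  intro l
  refine ⟨⟨⟨θ' * l.toAdd, 1⟩, ⟨l.toAdd, rfl⟩, ⟨0, by simp⟩, ⟨0, by simp⟩, ⟨0, by simp⟩⟩, ?_⟩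
  simp [lamThetaLevel, mul_div_cancel_left₀ _ hθ'0]

lemma mem_lamTheta_iff_dvd_lamThetaLevel {c : ℤ} (hc : θ = θ' * c)
    (g : LamTheta k θ' m' hθ') :
    (g : Osc) ∈ LamTheta k θ m hθ ↔ c ∣ (lamThetaLevel k hθ' hθ'0 g).toAdd := by
  have ht := t_eq_mul_lamThetaLevel hθ'0 g
  constructor
  · rintro ⟨⟨n, hn⟩, -⟩
    refine ⟨n, ?_⟩
    rw [ht, hc, mul_assoc] at hn
    exact_mod_cast mul_left_cancel₀ hθ'0 hn
  · rintro ⟨n, hn⟩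
    exact ⟨⟨n, by rw [ht, hn, hc]; push_cast; ring⟩, g.2.2⟩

noncomputable def lamThetaLevelMod (c : ℤ) :
    LamTheta k θ' m' hθ' →* Multiplicative (ZMod c.natAbs) :=
  (Int.castAddHom (ZMod c.natAbs)).toMultiplicative.comp (lamThetaLevel k hθ' hθ'0)

lemma lamThetaLevelMod_surjective (c : ℤ) :
    Function.Surjective (lamThetaLevelMod (k := k) (hθ' := hθ') hθ'0 c) :=
  ZMod.intCast_surjective.comp (lamThetaLevel_surjective hθ'0)

lemma ker_lamThetaLevelMod {c : ℤ} (hc : θ = θ' * c) :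
    (lamThetaLevelMod hθ'0 c).ker = (LamTheta k θ m hθ).subgroupOf (LamTheta k θ' m' hθ') := by
  ext g
  rw [MonoidHom.mem_ker, Subgroup.mem_subgroupOf, mem_lamTheta_iff_dvd_lamThetaLevel hθ hθ'0 hc,
    ← Int.natAbs_dvd, ← ZMod.intCast_zmod_eq_zero_iff_dvd]
  rfl

end

theorem lamTheta_subgroupOf_normal (hθ'0 : θ' ≠ 0) {c : ℤ} (hc : θ = θ' * c) :
    ((LamTheta k θ m hθ).subgroupOf (LamTheta k θ' m' hθ')).Normal :=
  ker_lamThetaLevelMod hθ hθ'0 hc ▸ (lamThetaLevelMod hθ'0 c).normal_ker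

theorem index_lamTheta_subgroupOf (hθ'0 : θ' ≠ 0) {c : ℤ} (hc : θ = θ' * c) :
    ((LamTheta k θ m hθ).subgroupOf (LamTheta k θ' m' hθ')).index = c.natAbs := by
  rw [← ker_lamThetaLevelMod hθ hθ'0 hc, Subgroup.index_ker,
    MonoidHom.range_eq_top.mpr (lamThetaLevelMod_surjective hθ'0 c), Subgroup.card_top,
    Nat.card_congr Multiplicative.toAdd, Nat.card_zmod]

end

/-- `Λ_{k,0} ⊆ Λ_{k,π} ⊆ Λ_{k,π/2}`, with the stated normalities and
indices. -/
theorem statement3 (k : ℕ+) :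
    Lam0 k ≤ LamPi k ∧ LamPi k ≤ LamPi2 k ∧
    ((Lam0 k).subgroupOf (LamPi k)).Normal ∧ ((Lam0 k).subgroupOf (LamPi k)).index = 2 ∧
    ((LamPi k).subgroupOf (LamPi2 k)).Normal ∧ ((LamPi k).subgroupOf (LamPi2 k)).index = 2 ∧
    ((Lam0 k).subgroupOf (LamPi2 k)).Normal ∧ ((Lam0 k).subgroupOf (LamPi2 k)).index = 4 := by
  have hπ2 : π / 2 ≠ 0 := by positivity
  have h0π : 2 * π = π * (2 : ℤ) := by push_cast; ring
  have hππ2 : π = π / 2 * (2 : ℤ) := by push_cast; ring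
  have h0π2 : 2 * π = π / 2 * (4 : ℤ) := by push_cast; ring
  exact ⟨lamTheta_le_lamTheta k _ _ 2 h0π, lamTheta_le_lamTheta k _ _ 2 hππ2,
    lamTheta_subgroupOf_normal k _ _ pi_ne_zero h0π,
    index_lamTheta_subgroupOf k _ _ pi_ne_zero h0π,
    lamTheta_subgroupOf_normal k _ _ hπ2 hππ2, index_lamTheta_subgroupOf k _ _ hπ2 hππ2,
    lamTheta_subgroupOf_normal k _ _ hπ2 h0π2, index_lamTheta_subgroupOf k _ _ hπ2 h0π2⟩
end

section
/- For every positive integer k, the commutator subgroup (derived subgroup) of Λ_{k,0} is exactly C = {0} × {0} × {0} × ℤ. -/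
open Real

/-!
Rotations by multiples of `2π` are trivial, so `Λ_{k,0}` is the direct product `2πℤ × Γ_k` and
its commutators are those of `Γ_k`: `⁅(a, b, c), (a', b', c')⁆ = (0, 0, ab' - a'b)`, and these
integers exhaust `ℤ`.
-/

open scoped commutatorElement

lemma Subgroup.coe_commutatorElement {G : Type*} [Group G] {H : Subgroup G} (a b : H) :
    ((⁅a, b⁆ : H) : G) = ⁅(a : G), (b : G)⁆ :=
  map_commutatorElement H.subtype a b

lemma Heis.commutatorElement_eq (v w : Heis) : ⁅v, w⁆ = ⟨0, 0, v.x * w.y - w.x * v.y⟩ := by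
  ext <;> simp [commutatorElement_def]; ring

lemma Real.sin_eq_zero_of_cos_eq_one {t : ℝ} (h : cos t = 1) : sin t = 0 :=
  sin_eq_zero_iff_cos_eq.mpr (Or.inl h)

lemma alphaMap_eq_self {t : ℝ} (h : cos t = 1) (v : Heis) : alphaMap t v = v := by
  ext <;> simp [h, sin_eq_zero_of_cos_eq_one h]

lemma Osc.commutatorElement_of_cos_eq_one {a b : Osc} (ha : cos a.t = 1) (hb : cos b.t = 1) :
    ⁅a, b⁆ = ⟨0, ⁅a.v, b.v⁆⟩ := by
  ext : 1
  · simp [commutatorElement_def]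
  · simp [commutatorElement_def, alphaMap_eq_self, cos_add, ha, hb,
      sin_eq_zero_of_cos_eq_one ha, sin_eq_zero_of_cos_eq_one hb]

def Osc.intCenter : Subgroup Osc where
  carrier := {g | g.t = 0 ∧ g.v.x = 0 ∧ g.v.y = 0 ∧ ∃ c : ℤ, g.v.z = c}
  one_mem' := ⟨rfl, rfl, rfl, 0, by simp⟩
  mul_mem' := by
    rintro a b ⟨hat, hax, hay, c, haz⟩ ⟨hbt, hbx, hby, d, hbz⟩
    refine ⟨by simp [hat, hbt], by simp [hax, hat, hbx], by simp [hay, hat, hby], c + d, ?_⟩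
    simp [hat, hax, hay, haz, hbz]
  inv_mem' := by
    rintro a ⟨hat, hax, hay, c, haz⟩
    exact ⟨by simp [hat], by simp [hat, hax], by simp [hat, hay], -c, by simp [haz]⟩

lemma cos_eq_one_of_mem_lam0 {k : ℕ+} {g : Osc} (hg : g ∈ Lam0 k) : cos g.t = 1 := by
  obtain ⟨⟨n, hn⟩, -⟩ := hg
  exact (cos_eq_one_iff _).mpr ⟨n, by rw [hn]; ring⟩

lemma commutator_lam0_le (k : ℕ+) : commutator (Lam0 k) ≤ Osc.intCenter.subgroupOf (Lam0 k) := by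
  rw [commutator_def, Subgroup.commutator_le]
  rintro a - b -
  obtain ⟨-, ⟨a₁, ha₁⟩, ⟨a₂, ha₂⟩, -⟩ := a.2
  obtain ⟨-, ⟨b₁, hb₁⟩, ⟨b₂, hb₂⟩, -⟩ := b.2
  rw [Subgroup.mem_subgroupOf, Subgroup.coe_commutatorElement,
    Osc.commutatorElement_of_cos_eq_one (cos_eq_one_of_mem_lam0 a.2) (cos_eq_one_of_mem_lam0 b.2),
    Heis.commutatorElement_eq]
  exact ⟨rfl, rfl, rfl, a₁ * b₂ - b₁ * a₂, by simp [ha₁, ha₂, hb₁, hb₂]⟩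

lemma intCenter_le_commutator_lam0 (k : ℕ+) :
    Osc.intCenter.subgroupOf (Lam0 k) ≤ commutator (Lam0 k) := by
  intro g hg
  obtain ⟨ht, hx, hy, c, hz⟩ := Subgroup.mem_subgroupOf.mp hg
  have hu : (⟨0, ⟨1, 0, 0⟩⟩ : Osc) ∈ Lam0 k :=
    ⟨⟨0, by simp⟩, ⟨1, by simp⟩, ⟨0, by simp⟩, ⟨0, by simp⟩⟩
  have hw : (⟨0, ⟨0, c, 0⟩⟩ : Osc) ∈ Lam0 k :=
    ⟨⟨0, by simp⟩, ⟨0, by simp⟩, ⟨c, by simp⟩, ⟨0, by simp⟩⟩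
  have hg_eq : g = ⁅(⟨_, hu⟩ : Lam0 k), ⟨_, hw⟩⁆ := by
    ext : 1
    rw [Subgroup.coe_commutatorElement, Osc.commutatorElement_of_cos_eq_one (by simp) (by simp),
      Heis.commutatorElement_eq]
    ext <;> simp [ht, hx, hy, hz]
  rw [hg_eq, commutator_def]
  exact Subgroup.commutator_mem_commutator trivial trivial

/-- The commutator (derived) subgroup of `Λ_{k,0}` is exactly
`C = {0} × {0} × {0} × ℤ`. -/
theorem statement6 (k : ℕ+) (g : Lam0 k) :
    g ∈ commutator (Lam0 k) ↔
      ((g : Osc).t = 0 ∧ (g : Osc).v.x = 0 ∧ (g : Osc).v.y = 0 ∧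
        ∃ c : ℤ, (g : Osc).v.z = c) := by
  rw [le_antisymm (commutator_lam0_le k) (intCenter_le_commutator_lam0 k)]
  exact Subgroup.mem_subgroupOf
end

section
/- Let k, p be positive integers, let i, j ∈ {0, π, π/2}, and let φ : Λ_{p,j} → Λ_{k,i} be a group isomorphism. Then for every element γ ∈ Λ_{p,j} whose first coordinate is an odd integer multiple of π, the first coordinate of φ(γ) is not an even integer multiple of π (i.e. φ never maps an element with first coordinate in π + 2πℤ to an element with first coordinate in 2πℤ). -/
open Real

/-! An element `γ` with `γ.t ∈ π + 2πℤ` acts on `H₃(ℝ)` by `(x, y, z) ↦ (-x, -y, z)`, so `γ²` is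
central in `G` while `γ` does not commute with `e_x = (0, 1, 0, 0)`. If `w = φ γ` had `w.t ∈ 2πℤ`,
then `w² = (2 w.t, 2 w.x, 2 w.y, 2 w.z)` would be central in `Λ_{k,i}`; commuting with `e_x` and `e_y`
forces `w.x = w.y = 0`, so `w` is central in `G`, hence in `Λ_{k,i}`, and then so is `γ = φ⁻¹ w` in
`Λ_{p,j}`, a contradiction. -/

lemma Subgroup.mem_center_of_coe_mem_center {G : Type*} [Group G] {H : Subgroup G} {h : H}
    (hh : (h : G) ∈ Set.center G) : h ∈ Set.center H :=
  Semigroup.mem_center_iff.mpr fun g => Subtype.ext (Semigroup.mem_center_iff.mp hh g)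

lemma alphaMap_two_pi_mul_int (l : ℤ) (v : Heis) : alphaMap (2 * π * l) v = v := by
  have hcos : cos (2 * π * l) = 1 := by rw [mul_comm]; exact cos_int_mul_two_pi l
  have hsin : sin (2 * π * l) = 0 := by
    rw [← sin_int_mul_pi (2 * l)]; push_cast; ring_nf
  ext <;> simp [hcos, hsin]

lemma alphaMap_odd_mul_pi (l : ℤ) (v : Heis) :
    alphaMap ((2 * l + 1) * π) v = ⟨-v.x, -v.y, v.z⟩ := by
  have hcos : cos ((2 * l + 1) * π) = -1 := by
    rw [← cos_int_mul_two_pi_add_pi l]; ring_nf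
  have hsin : sin ((2 * l + 1) * π) = 0 := by
    rw [← sin_int_mul_pi (2 * l + 1)]; push_cast; ring_nf
  ext <;> simp [hcos, hsin]

namespace Osc

def unitX : Osc := ⟨0, ⟨1, 0, 0⟩⟩

def unitY : Osc := ⟨0, ⟨0, 1, 0⟩⟩

lemma unitX_mem_LamTheta (k : ℕ+) (θ : ℝ) (m : ℤ) (hθ : θ = π / 2 * m) :
    unitX ∈ LamTheta k θ m hθ :=
  ⟨⟨0, by simp [unitX]⟩, ⟨1, by simp [unitX]⟩, ⟨0, by simp [unitX]⟩, ⟨0, by simp [unitX]⟩⟩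

lemma unitY_mem_LamTheta (k : ℕ+) (θ : ℝ) (m : ℤ) (hθ : θ = π / 2 * m) :
    unitY ∈ LamTheta k θ m hθ :=
  ⟨⟨0, by simp [unitY]⟩, ⟨0, by simp [unitY]⟩, ⟨1, by simp [unitY]⟩, ⟨0, by simp [unitY]⟩⟩

lemma unitX_mem_and_unitY_mem {k : ℕ+} {Λ : Subgroup Osc}
    (hΛ : Λ ∈ ({Lam0 k, LamPi k, LamPi2 k} : Set (Subgroup Osc))) : unitX ∈ Λ ∧ unitY ∈ Λ := by
  rcases hΛ with rfl | rfl | rfl <;> exact ⟨unitX_mem_LamTheta .., unitY_mem_LamTheta ..⟩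

lemma mk_mem_center (l : ℤ) (c : ℝ) : (⟨2 * π * l, ⟨0, 0, c⟩⟩ : Osc) ∈ Set.center Osc :=
  Semigroup.mem_center_iff.mpr fun g => by
    ext <;> simp [alphaMap_two_pi_mul_int] <;> ring

lemma mul_self_mem_center {g : Osc} {l : ℤ} (hg : g.t = (2 * l + 1) * π) :
    g * g ∈ Set.center Osc := by
  have hsq : g * g = ⟨2 * π * (2 * l + 1 : ℤ), ⟨0, 0, 2 * g.v.z⟩⟩ := by
    ext <;> simp [hg, alphaMap_odd_mul_pi] <;> ring
  rw [hsq]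
  exact mk_mem_center _ _

lemma commute_mk_unitX_iff (l : ℤ) (v : Heis) :
    Commute (⟨2 * π * l, v⟩ : Osc) unitX ↔ v.y = 0 := by
  constructor
  · intro h
    have := congrArg (fun g : Osc => g.v.z) h.eq
    simp [unitX, alphaMap_two_pi_mul_int] at this
    linarith
  · intro hy
    ext <;> simp [unitX, alphaMap_two_pi_mul_int, hy, add_comm]

lemma commute_mk_unitY_iff (l : ℤ) (v : Heis) :
    Commute (⟨2 * π * l, v⟩ : Osc) unitY ↔ v.x = 0 := by
  constructor
  · intro h
    have := congrArg (fun g : Osc => g.v.z) h.eq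
    simp [unitY, alphaMap_two_pi_mul_int] at this
    linarith
  · intro hx
    ext <;> simp [unitY, alphaMap_two_pi_mul_int, hx, add_comm]

lemma mem_center_of_commute_mul_self {w : Osc} {l : ℤ} (hw : w.t = 2 * π * l)
    (hx : Commute (w * w) unitX) (hy : Commute (w * w) unitY) : w ∈ Set.center Osc := by
  have hsq : w * w = ⟨2 * π * (2 * l : ℤ), ⟨2 * w.v.x, 2 * w.v.y, 2 * w.v.z⟩⟩ := by
    ext <;> simp [hw, alphaMap_two_pi_mul_int] <;> ring
  rw [hsq, commute_mk_unitX_iff] at hx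
  rw [hsq, commute_mk_unitY_iff] at hy
  have hw' : w = ⟨2 * π * l, ⟨0, 0, w.v.z⟩⟩ :=
    Osc.ext hw (Heis.ext (by simpa using hy) (by simpa using hx) rfl)
  rw [hw']
  exact mk_mem_center _ _

lemma not_commute_unitX {g : Osc} {l : ℤ} (hg : g.t = (2 * l + 1) * π) :
    ¬ Commute g unitX := by
  intro h
  have := congrArg (fun g : Osc => g.v.x) h.eq
  simp [unitX, hg, alphaMap_odd_mul_pi] at this
  linarith

end Osc

open Osc in
/-- An isomorphism `φ : Λ_{p,j} → Λ_{k,i}` never maps an element whose first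
coordinate is an odd integer multiple of `π` to an element whose first coordinate is an even
integer multiple of `π`. -/
theorem statement8 (k p : ℕ+) (Λ₁ Λ₂ : Subgroup Osc)
    (h₁ : Λ₁ ∈ ({Lam0 p, LamPi p, LamPi2 p} : Set (Subgroup Osc)))
    (h₂ : Λ₂ ∈ ({Lam0 k, LamPi k, LamPi2 k} : Set (Subgroup Osc)))
    (φ : Λ₁ ≃* Λ₂) (γ : Λ₁) (l : ℤ) (hγ : (γ : Osc).t = (2 * l + 1) * π) :
    ¬ ∃ l' : ℤ, ((φ γ : Λ₂) : Osc).t = 2 * π * l' := by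
  rintro ⟨l', hl'⟩
  obtain ⟨hx₁, -⟩ := unitX_mem_and_unitY_mem h₁
  obtain ⟨hx₂, hy₂⟩ := unitX_mem_and_unitY_mem h₂
  have hsq : φ γ * φ γ ∈ Set.center Λ₂ := by
    rw [← map_mul]
    exact MulEquivClass.apply_mem_center φ
      (Subgroup.mem_center_of_coe_mem_center (mul_self_mem_center hγ))
  have hw : φ γ ∈ Set.center Λ₂ := Subgroup.mem_center_of_coe_mem_center <|
    mem_center_of_commute_mul_self hl' ((hsq.comm ⟨_, hx₂⟩).map Λ₂.subtype)
      ((hsq.comm ⟨_, hy₂⟩).map Λ₂.subtype)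
  have hγ_center : γ ∈ Set.center Λ₁ := (MulEquivClass.apply_mem_center_iff φ).mp hw
  exact not_commute_unitX hγ ((hγ_center.comm ⟨_, hx₁⟩).map Λ₁.subtype)
end

section
/- If k and p are positive integers with k ≠ p, then the groups Λ_{k,0} and Λ_{p,0} are not isomorphic. -/
open Real

/-! Since `α(2πn)` is the identity, `Λ_{k,0}` embeds in the direct product `ℝ × H₃(ℝ)`, and its
commutator subgroup is generated by the central element `(0,0,0,1) = ⁅(0,1,0,0), (0,0,1,0)⁆`.
Every element with a power in the commutator subgroup is central of the form `(0,0,0,c/(2k))`, so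
the torsion of the abelianization of `Λ_{k,0}` is cyclic of order `2k`, generated by the class of
`(0,0,0,1/(2k))`. The exponent of that torsion subgroup is an isomorphism invariant. -/

open scoped commutatorElement

lemma Abelianization.of_eq_one_iff {G : Type*} [Group G] {g : G} :
    Abelianization.of g = 1 ↔ g ∈ commutator G := by
  rw [← MonoidHom.mem_ker, Abelianization.ker_of]

lemma MulEquiv.exponent_torsion_eq {A B : Type*} [CommGroup A] [CommGroup B] (e : A ≃* B) :
    Monoid.exponent (CommGroup.torsion A) = Monoid.exponent (CommGroup.torsion B) :=
  Monoid.exponent_eq_of_mulEquiv ((e.subgroupMap _).trans (MulEquiv.subgroupCongr e.map_torsion))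

namespace Heis

noncomputable def centralHom : Multiplicative ℝ →* Heis where
  toFun z := ⟨0, 0, z.toAdd⟩
  map_one' := rfl
  map_mul' _ _ := by ext <;> simp

@[simp] lemma centralHom_apply (z : Multiplicative ℝ) : centralHom z = ⟨0, 0, z.toAdd⟩ := rfl

lemma commutatorElement_eq_s9 (v w : Heis) :
    ⁅v, w⁆ = centralHom (.ofAdd (v.x * w.y - w.x * v.y)) := by
  rw [centralHom_apply, toAdd_ofAdd]
  ext <;> simp [commutatorElement_def]; ring

lemma pow_x (v : Heis) (n : ℕ) : (v ^ n).x = n * v.x := by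
  induction n with
  | zero => simp
  | succ n ih => simp [pow_succ, ih]; ring

lemma pow_y (v : Heis) (n : ℕ) : (v ^ n).y = n * v.y := by
  induction n with
  | zero => simp
  | succ n ih => simp [pow_succ, ih]; ring

end Heis

lemma alphaMap_two_pi_int_mul (n : ℤ) (v : Heis) : alphaMap (2 * π * n) v = v := by
  have hcos : cos (2 * π * n) = 1 := by
    rw [mul_comm]; exact cos_int_mul_two_pi n
  have hsin : sin (2 * π * n) = 0 := by
    simpa [mul_comm, mul_left_comm] using sin_int_mul_pi (2 * n)
  ext <;> simp [hcos, hsin]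

namespace Lam0

variable (k : ℕ+)

noncomputable def toProd : Lam0 k →* Multiplicative ℝ × Heis where
  toFun g := (.ofAdd (g : Osc).t, (g : Osc).v)
  map_one' := rfl
  map_mul' g h := by
    obtain ⟨⟨n, hn⟩, -⟩ := g.2
    refine Prod.ext rfl ?_
    show (g : Osc).v * alphaMap (g : Osc).t (h : Osc).v = (g : Osc).v * (h : Osc).v
    rw [hn, alphaMap_two_pi_int_mul]

@[simp] lemma toProd_apply (g : Lam0 k) : toProd k g = (.ofAdd (g : Osc).t, (g : Osc).v) := rfl

lemma toProd_injective : Function.Injective (toProd k) := fun _ _ hgh =>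
  Subtype.ext (Osc.ext (congrArg (Multiplicative.toAdd ∘ Prod.fst) hgh) (congrArg Prod.snd hgh))

lemma toProd_commutatorElement (g h : Lam0 k) :
    toProd k ⁅g, h⁆ = (1, ⁅(g : Osc).v, (h : Osc).v⁆) := by
  rw [map_commutatorElement]
  exact Prod.ext (commutatorElement_eq_one_iff_commute.mpr (.all _ _)) rfl

noncomputable def zGen : Lam0 k :=
  ⟨⟨0, ⟨0, 0, 1 / (2 * k)⟩⟩, ⟨0, by simp⟩, ⟨0, by simp⟩, ⟨0, by simp⟩, ⟨1, by simp⟩⟩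

lemma toProd_zGen_zpow (c : ℤ) :
    toProd k (zGen k ^ c) = (1, Heis.centralHom (.ofAdd (c / (2 * k)))) := by
  rw [map_zpow, show toProd k (zGen k) = (1, Heis.centralHom (.ofAdd (1 / (2 * k)))) from rfl,
    Prod.pow_mk, one_zpow, ← map_zpow, ← ofAdd_zsmul, zsmul_eq_mul, mul_one_div]

lemma commutator_eq_zpowers :
    commutator (Lam0 k) = Subgroup.zpowers (zGen k ^ (2 * k : ℤ)) := by
  have hk : (k : ℝ) ≠ 0 := by positivity
  apply le_antisymm
  · rw [commutator, Subgroup.commutator_le]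
    rintro g - h -
    obtain ⟨-, ⟨a₁, ha₁⟩, ⟨b₁, hb₁⟩, -⟩ := g.2
    obtain ⟨-, ⟨a₂, ha₂⟩, ⟨b₂, hb₂⟩, -⟩ := h.2
    refine Subgroup.mem_zpowers_iff.mpr ⟨a₁ * b₂ - a₂ * b₁, toProd_injective k ?_⟩
    rw [← zpow_mul, toProd_zGen_zpow, toProd_commutatorElement, Heis.commutatorElement_eq_s9,
      ha₁, hb₁, ha₂, hb₂]
    congr 3
    push_cast
    field_simp
  · rw [Subgroup.zpowers_le]
    let e₁ : Lam0 k := ⟨⟨0, ⟨1, 0, 0⟩⟩, ⟨0, by simp⟩, ⟨1, by simp⟩, ⟨0, by simp⟩, ⟨0, by simp⟩⟩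
    let e₂ : Lam0 k := ⟨⟨0, ⟨0, 1, 0⟩⟩, ⟨0, by simp⟩, ⟨0, by simp⟩, ⟨1, by simp⟩, ⟨0, by simp⟩⟩
    have h : zGen k ^ (2 * k : ℤ) = ⁅e₁, e₂⁆ := by
      refine toProd_injective k ?_
      rw [toProd_zGen_zpow, toProd_commutatorElement, Heis.commutatorElement_eq_s9]
      congr 3
      simp [e₁, e₂]
    rw [h]
    exact Subgroup.commutator_mem_commutator (Subgroup.mem_top _) (Subgroup.mem_top _)

lemma zGen_pow_mem_commutator_iff (n : ℕ) :
    zGen k ^ n ∈ commutator (Lam0 k) ↔ 2 * (k : ℕ) ∣ n := by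
  have hk : (k : ℝ) ≠ 0 := by positivity
  rw [commutator_eq_zpowers, ← Int.natCast_dvd_natCast, ← zpow_natCast, Subgroup.mem_zpowers_iff]
  constructor
  · rintro ⟨c, hc⟩
    have hz := congrArg (fun g => (toProd k g).2.z) hc
    simp only [← zpow_mul, toProd_zGen_zpow, Heis.centralHom_apply, toAdd_ofAdd] at hz
    field_simp at hz
    exact ⟨c, by push_cast; exact_mod_cast hz.symm⟩
  · rintro ⟨j, hj⟩
    exact ⟨j, by rw [← zpow_mul, hj]; push_cast; rfl⟩

lemma exists_eq_zGen_zpow_of_pow_mem_commutator {g : Lam0 k} {m : ℕ} (hm : m ≠ 0)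
    (hg : g ^ m ∈ commutator (Lam0 k)) : ∃ c : ℤ, g = zGen k ^ c := by
  rw [commutator_eq_zpowers] at hg
  obtain ⟨j, hj⟩ := Subgroup.mem_zpowers_iff.mp hg
  have h := congrArg (toProd k) hj
  rw [← zpow_mul, toProd_zGen_zpow, map_pow, toProd_apply, Prod.pow_mk, Prod.mk.injEq] at h
  have ht : (g : Osc).t = 0 := by
    simpa [hm] using congrArg Multiplicative.toAdd h.1
  have hx : (g : Osc).v.x = 0 := by
    simpa [Heis.pow_x, hm] using congrArg Heis.x h.2
  have hy : (g : Osc).v.y = 0 := by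
    simpa [Heis.pow_y, hm] using congrArg Heis.y h.2
  obtain ⟨-, -, -, c, hc⟩ := g.2
  refine ⟨c, toProd_injective k ?_⟩
  rw [toProd_zGen_zpow, toProd_apply, ht]
  ext <;> simp [hx, hy, hc]

lemma exponent_torsion_abelianization :
    Monoid.exponent (CommGroup.torsion (Abelianization (Lam0 k))) = 2 * k := by
  apply Nat.dvd_antisymm
  · refine Monoid.exponent_dvd_of_forall_pow_eq_one fun ⟨x, hx⟩ => Subtype.ext ?_
    obtain ⟨m, hm, hxm⟩ := isOfFinOrder_iff_pow_eq_one.mp hx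
    obtain ⟨g, rfl⟩ := QuotientGroup.mk_surjective x
    change Abelianization.of g ^ m = 1 at hxm
    rw [← map_pow, Abelianization.of_eq_one_iff] at hxm
    obtain ⟨c, rfl⟩ := exists_eq_zGen_zpow_of_pow_mem_commutator k hm.ne' hxm
    change Abelianization.of (zGen k ^ c) ^ (2 * (k : ℕ)) = 1
    rw [← map_pow, Abelianization.of_eq_one_iff, ← zpow_natCast, ← zpow_mul, mul_comm,
      zpow_mul, zpow_natCast]
    exact Subgroup.zpow_mem _ ((zGen_pow_mem_commutator_iff k _).mpr dvd_rfl) _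
  · have hfin : IsOfFinOrder (Abelianization.of (zGen k)) :=
      isOfFinOrder_iff_pow_eq_one.mpr ⟨2 * k, by positivity, by
        rw [← map_pow, Abelianization.of_eq_one_iff, zGen_pow_mem_commutator_iff]⟩
    have h := congrArg Subtype.val (Monoid.pow_exponent_eq_one (⟨_, hfin⟩ : CommGroup.torsion _))
    rw [SubgroupClass.coe_pow, OneMemClass.coe_one, ← map_pow, Abelianization.of_eq_one_iff] at h
    exact (zGen_pow_mem_commutator_iff k _).mp h

end Lam0

/-- If `k ≠ p` then `Λ_{k,0}` and `Λ_{p,0}` are not isomorphic. -/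
theorem statement9 (k p : ℕ+) (h : k ≠ p) : IsEmpty (Lam0 k ≃* Lam0 p) := by
  refine ⟨fun e => h ?_⟩
  have := e.abelianizationCongr.exponent_torsion_eq
  rw [Lam0.exponent_torsion_abelianization, Lam0.exponent_torsion_abelianization] at this
  exact PNat.coe_injective (by omega)
end

section
/- Let l be an odd positive integer, let q, r be positive real numbers, and let k be a positive integer. If L = (π/2)·lℤ × qℤ × rℤ × (qr/(2k))ℤ is a subgroup of the oscillator group G, then q = r. -/
open Real

/- Since `cos (π/2 · l) = 0` for odd `l`, the rotation `α(π/2 · l)` swaps the two horizontal axes up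
to sign. Multiplying the generator `(π/2 · l, 0)` of `L` with `(0, (q, 0, 0))` resp. `(0, (0, r, 0))`
therefore lands on `(π/2 · l, (0, ∓q, 0))` resp. `(π/2 · l, (±r, 0, 0))`, so `q ∈ rℤ` and `r ∈ qℤ`;
for positive `q`, `r` this forces `q = r`. -/

lemma Real.abs_sin_pi_div_two_mul_of_odd {l : ℕ} (hl : Odd l) : |sin (π / 2 * l)| = 1 := by
  obtain ⟨j, rfl⟩ := hl
  exact Real.abs_sin_eq_one_iff.2 ⟨j, by push_cast; ring⟩

lemma le_abs_of_eq_mul_int {x r : ℝ} {n : ℤ} (hr : 0 ≤ r) (hx : x = r * n) (hx0 : x ≠ 0) :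
    r ≤ |x| := by
  have hn : n ≠ 0 := by rintro rfl; simp [hx] at hx0
  have hn1 : (1 : ℝ) ≤ |(n : ℝ)| := by exact_mod_cast Int.one_le_abs hn
  rw [hx, abs_mul, abs_of_nonneg hr]
  nlinarith

lemma eq_of_mul_mem_prodSet {p q r s : ℝ} (hq : 0 < q) (hr : 0 < r) (hsin : |sin p| = 1)
    (hmul : ∀ g h, g ∈ prodSet p q r s → h ∈ prodSet p q r s → g * h ∈ prodSet p q r s) :
    q = r := by
  have mem (a b c d : ℤ) : (⟨p * a, ⟨q * b, r * c, s * d⟩⟩ : Osc) ∈ prodSet p q r s :=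
    ⟨⟨a, rfl⟩, ⟨b, rfl⟩, ⟨c, rfl⟩, ⟨d, rfl⟩⟩
  obtain ⟨-, -, ⟨n, hn⟩, -⟩ := hmul _ _ (mem 1 0 0 0) (mem 0 1 0 0)
  obtain ⟨-, ⟨m, hm⟩, -, -⟩ := hmul _ _ (mem 1 0 0 0) (mem 0 0 1 0)
  have hsin0 : sin p ≠ 0 := fun h => by simp [h] at hsin
  have hrq : r ≤ q := by
    have := le_abs_of_eq_mul_int hr.le (by simpa using hn) (by simp [hq.ne', hsin0])
    rwa [abs_neg, abs_mul, hsin, mul_one, abs_of_pos hq] at this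
  have hqr : q ≤ r := by
    have := le_abs_of_eq_mul_int hq.le (by simpa using hm) (by simp [hr.ne', hsin0])
    rwa [abs_mul, hsin, mul_one, abs_of_pos hr] at this
  exact le_antisymm hqr hrq

theorem statement12_general (l : ℕ) (hodd : Odd l) (q r : ℝ) (hq : 0 < q) (hr : 0 < r)
    (k : ℕ+) (S : Subgroup Osc)
    (hS : (S : Set Osc) = prodSet (π / 2 * (l : ℝ)) q r (q * r / (2 * ((k : ℕ) : ℝ)))) :
    q = r := by
  have hmul : ∀ g h, g ∈ (S : Set Osc) → h ∈ (S : Set Osc) → g * h ∈ (S : Set Osc) :=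
    fun _ _ => S.mul_mem
  rw [hS] at hmul
  exact eq_of_mul_mem_prodSet hq hr (Real.abs_sin_pi_div_two_mul_of_odd hodd) hmul

/-- If `l` is an odd positive integer, `q, r > 0`, `k` a positive integer, and
`L = (π/2)lℤ × qℤ × rℤ × (qr/(2k))ℤ` is a subgroup of the oscillator group, then `q = r`. -/
theorem statement12 (l : ℕ) (hodd : Odd l) (hl : 0 < l) (q r : ℝ) (hq : 0 < q) (hr : 0 < r)
    (k : ℕ+) (S : Subgroup Osc)
    (hS : (S : Set Osc) = prodSet (π / 2 * (l : ℝ)) q r (q * r / (2 * ((k : ℕ) : ℝ)))) :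
    q = r :=
  statement12_general l hodd q r hq hr k S hS
end

section
/- Let l be a nonnegative integer, k a positive integer, and q, r positive real numbers. Then L = (2l+1)πℤ × qℤ × rℤ × (qr/(2k))ℤ is a subgroup of the oscillator group G, and the map γ₂ : Λ_{k,π} → L defined by γ₂(t,x,y,z) = ((2l+1)·t, q·x, r·y, qr·z) is a group isomorphism. -/
open Real

/-! For odd `m` and `t ∈ πℤ`, rotation by `mt` equals rotation by `t = ±1`, and such rotations
commute with the dilations `(x, y, z) ↦ (qx, ry, qrz)` of the Heisenberg group. Hence
`(t, v) ↦ (mt, qx, ry, qrz)`, a bijection of `Osc`, is a homomorphism on `Λ_{k,π}`; `L` is its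
image, so it is a subgroup without further work. -/

namespace Heis

def scale (q r : ℝ) (v : Heis) : Heis := ⟨q * v.x, r * v.y, q * r * v.z⟩

lemma scale_mul (q r : ℝ) (v w : Heis) : scale q r (v * w) = scale q r v * scale q r w := by
  ext <;> simp only [scale, mul_x, mul_y, mul_z] <;> ring

end Heis

lemma alphaMap_scale_of_sin_eq_zero {t : ℝ} (ht : sin t = 0) (q r : ℝ) (v : Heis) :
    alphaMap t (Heis.scale q r v) = Heis.scale q r (alphaMap t v) := by
  ext <;> simp only [Heis.scale, alphaMap_x, alphaMap_y, alphaMap_z, ht] <;> ring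

lemma alphaMap_add_int_mul_two_pi (t : ℝ) (n : ℤ) (v : Heis) :
    alphaMap (t + n * (2 * π)) v = alphaMap t v := by
  ext <;> simp only [alphaMap_x, alphaMap_y, alphaMap_z, cos_add_int_mul_two_pi,
    sin_add_int_mul_two_pi]

namespace Osc

def scale (m q r : ℝ) (g : Osc) : Osc := ⟨m * g.t, Heis.scale q r g.v⟩

lemma scale_one (m q r : ℝ) : scale m q r 1 = 1 := by
  ext <;> simp [scale, Heis.scale]

lemma scale_mul {m q r : ℝ} {g : Osc} (hsin : sin g.t = 0)
    (hα : alphaMap (m * g.t) = alphaMap g.t) (h : Osc) :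
    scale m q r (g * h) = scale m q r g * scale m q r h := by
  ext1
  · simp only [scale, mul_t]
    ring
  · simp only [scale, mul_v, Heis.scale_mul, hα, alphaMap_scale_of_sin_eq_zero hsin]

lemma scale_inv_scale {m q r : ℝ} (hm : m ≠ 0) (hq : q ≠ 0) (hr : r ≠ 0) (g : Osc) :
    scale m⁻¹ q⁻¹ r⁻¹ (scale m q r g) = g := by
  ext <;> simp only [scale, Heis.scale] <;> field_simp

lemma scale_scale_inv {m q r : ℝ} (hm : m ≠ 0) (hq : q ≠ 0) (hr : r ≠ 0) (g : Osc) :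
    scale m q r (scale m⁻¹ q⁻¹ r⁻¹ g) = g := by
  simpa only [inv_inv] using scale_inv_scale (inv_ne_zero hm) (inv_ne_zero hq) (inv_ne_zero hr) g

lemma scale_injective {m q r : ℝ} (hm : m ≠ 0) (hq : q ≠ 0) (hr : r ≠ 0) :
    Function.Injective (scale m q r) :=
  Function.LeftInverse.injective (scale_inv_scale hm hq hr)

lemma image_scale_prodSet {m q r : ℝ} (hm : m ≠ 0) (hq : q ≠ 0) (hr : r ≠ 0) (a b c d : ℝ) :
    scale m q r '' prodSet a b c d = prodSet (m * a) (q * b) (r * c) (q * r * d) := by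
  rw [Set.image_eq_preimage_of_inverse (scale_inv_scale hm hq hr) (scale_scale_inv hm hq hr)]
  ext g
  simp only [prodSet, Set.mem_preimage, Set.mem_ofPred_eq, scale, Heis.scale, ← mul_inv,
    inv_mul_eq_iff_eq_mul₀ hm, inv_mul_eq_iff_eq_mul₀ hq, inv_mul_eq_iff_eq_mul₀ hr,
    inv_mul_eq_iff_eq_mul₀ (mul_ne_zero hq hr), mul_assoc]

end Osc

lemma coe_LamPi (k : ℕ+) : (LamPi k : Set Osc) = prodSet π 1 1 (1 / (2 * ((k : ℕ) : ℝ))) := by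
  ext g
  simp only [SetLike.mem_coe, prodSet, Set.mem_ofPred_eq, one_mul, one_div_mul_eq_div]
  rfl

lemma alphaMap_odd_mul_int_mul_pi (l : ℕ) (n : ℤ) :
    alphaMap ((2 * (l : ℝ) + 1) * (π * n)) = alphaMap (π * n) := by
  funext v
  have hodd : (2 * (l : ℝ) + 1) * (π * n) = π * n + (l * n : ℤ) * (2 * π) := by
    push_cast
    ring
  rw [hodd, alphaMap_add_int_mul_two_pi]

noncomputable def LamPi.oddScale (l : ℕ) (k : ℕ+) (q r : ℝ) : LamPi k →* Osc where
  toFun g := Osc.scale (2 * l + 1) q r g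
  map_one' := Osc.scale_one _ _ _
  map_mul' g h := by
    obtain ⟨⟨n, hn⟩, -⟩ := g.2
    refine Osc.scale_mul ?_ ?_ h
    · rw [hn, mul_comm]
      exact sin_int_mul_pi n
    · rw [hn]
      exact alphaMap_odd_mul_int_mul_pi l n

/-- For a nonnegative integer `l`, a positive integer `k` and positive reals
`q, r`, the set `L = (2l+1)πℤ × qℤ × rℤ × (qr/(2k))ℤ` is a subgroup of the oscillator group,
and `γ₂(t,x,y,z) = ((2l+1)t, qx, ry, qrz)` is a group isomorphism `Λ_{k,π} → L`. -/
theorem statement14 (l : ℕ) (k : ℕ+) (q r : ℝ) (hq : 0 < q) (hr : 0 < r) :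
    ∃ S : Subgroup Osc,
      (S : Set Osc) = prodSet ((2 * (l : ℝ) + 1) * π) q r (q * r / (2 * ((k : ℕ) : ℝ))) ∧
      ∃ φ : LamPi k ≃* S, ∀ g : LamPi k,
        (↑(φ g) : Osc) = ⟨(2 * (l : ℝ) + 1) * (g : Osc).t,
          ⟨q * (g : Osc).v.x, r * (g : Osc).v.y, q * r * (g : Osc).v.z⟩⟩ := by
  have hm : (2 * (l : ℝ) + 1) ≠ 0 := by positivity
  have hγ : Function.Injective (LamPi.oddScale l k q r) := fun g h hgh =>
    Subtype.ext (Osc.scale_injective hm hq.ne' hr.ne' hgh)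
  refine ⟨(LamPi.oddScale l k q r).range, ?_, MonoidHom.ofInjective hγ, fun g => rfl⟩
  have hrange : Set.range (LamPi.oddScale l k q r) = Osc.scale (2 * l + 1) q r '' LamPi k :=
    (Set.image_eq_range (Osc.scale (2 * l + 1) q r) (LamPi k : Set Osc)).symm
  rw [MonoidHom.coe_range, hrange, coe_LamPi, Osc.image_scale_prodSet hm hq.ne' hr.ne']
  simp only [mul_one, mul_one_div]
end
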